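/- Let G be a finite stop parity game with a player-aware coloring χ, let v be a vertex, let ρ be a strategy safe from v, and let c ∈ C_E be such that every vertex of color c has an outgoing edge to v. If Loop(Φ(G, ρ, v), c) is defined (i.e. c ∉ dom Φ(G, ρ, v) or Φ(G, ρ, v)(c) is even), then there exists a strategy ρ' that is safe from v in G and satisfies Φ(G, ρ', v) = Loop(Φ(G, ρ, v), c). -/

import Mathlib

open Classical

/-- `p ≺ q` iff `(-1)^p * p < (-1)^q * q` computed in `ℤ`. -/
def prec (p q : ℕ) : Prop := ((-1 : ℤ) ^ p * p < (-1 : ℤ) ^ q * q)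

/-- `p ⪯ q` iff `p ≺ q` or `p = q`. -/
def preceq (p q : ℕ) : Prop := prec p q ∨ p = q

/-- An enforcement is a partial function `C ⇀ ℕ`, modelled as `C → Option ℕ`.
`esub P Q` is the relation `P ⊑ Q`: `dom P ⊆ dom Q` and for every `a ∈ dom P`,
`Q a ⪯ P a`. -/
def esub {C : Type*} (P Q : C → Option ℕ) : Prop :=
  ∀ a p, P a = some p → ∃ q, Q a = some q ∧ preceq q p

/-- The `⪯`-minimum of a set of naturals, when it exists. -/
noncomputable def pmin (S : Set ℕ) : Option ℕ :=
  if h : ∃ m ∈ S, ∀ x ∈ S, preceq m x then some h.choose else none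

/-- The union `P ⊔ Q`: its domain is `dom P ∪ dom Q` and its value at `a`
is the `⪯`-minimum of the defined ones among `P a`, `Q a`. -/
noncomputable def eunion {C : Type*} (P Q : C → Option ℕ) : C → Option ℕ := fun a =>
  match P a, Q a with
  | none, q => q
  | some p, none => some p
  | some p, some q => some (if preceq p q then p else q)

/-- The lift `Q↑r`: same domain as `Q`, value `max (Q a) r`. -/
def elift {C : Type*} (Q : C → Option ℕ) (r : ℕ) : C → Option ℕ :=
  fun a => (Q a).map fun q => max q r

/-- `Merge(P, c, Q)`, where `CE` is the set of colors of player E (the colors of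
player O form its complement). -/
noncomputable def emerge {C : Type*} (CE : Set C) (P : C → Option ℕ) (c : C)
    (Q : C → Option ℕ) : C → Option ℕ :=
  match P c with
  | none => P
  | some r =>
      if c ∈ CE then eunion (fun a => if a = c then none else P a) (elift Q r)
      else eunion P (elift Q r)

/-- An arena: a directed graph with vertices partitioned between the players;
`owner u = true` means `u` belongs to player E. -/
structure Arena (V : Type*) where
  owner : V → Bool
  edge : V → V → Prop

/-- A strategy for player E in a stop parity game on arena `A`: to every finite
history (the list of previously visited vertices) and current vertex `u ∈ V_E` it
assigns either a vertex `w` with `edge u w` (`some w`) or the move STOP (`none`). -/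
structure EStrategy {V : Type*} (A : Arena V) where
  move : List V → V → Option V
  legal : ∀ h u w, move h u = some w → A.edge u w

/-- A play from `v` in the stop parity game on arena `A`: a maximal sequence of
vertices starting at `v` and following edges; a finite play either is ended
by the STOP move of player E at one of his vertices (`stopped = true`) or ends at
a vertex with no outgoing edges (`stopped = false`). -/
structure Play {V : Type*} (A : Arena V) (v : V) where
  seq : ℕ → Option V
  stopped : Bool
  start : seq 0 = some v
  none_succ : ∀ n, seq n = none → seq (n + 1) = none
  step : ∀ n u w, seq n = some u → seq (n + 1) = some w → A.edge u w
  maximal : ∀ n u, seq n = some u → seq (n + 1) = none →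
    (stopped = true ∧ A.owner u = true) ∨ (stopped = false ∧ ∀ w, ¬ A.edge u w)

/-- The history of a play before position `n` (the list of its first `n` vertices). -/
def Play.hist {V : Type*} {A : Arena V} {v : V} (p : Play A v) (n : ℕ) : List V :=
  (List.range n).filterMap p.seq

/-- A play is consistent with a strategy `ρ` of player E if every move made from a
vertex of player E is the one prescribed by `ρ` (where `ρ` prescribing `none` means
that the play is ended by STOP). -/
def ConsistentWith {V : Type*} {A : Arena V} {v : V} (ρ : EStrategy A) (p : Play A v) :
    Prop :=
  ∀ n u, p.seq n = some u → A.owner u = true →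
    p.seq (n + 1) = ρ.move (p.hist n) u ∧ (p.seq (n + 1) = none → p.stopped = true)

/-- A play is finite if its sequence is eventually `none`. -/
def Play.IsFinite {V : Type*} {A : Arena V} {v : V} (p : Play A v) : Prop :=
  ∃ n, p.seq n = none

/-- A play ended by the STOP move. -/
def Play.EndedByStop {V : Type*} {A : Arena V} {v : V} (p : Play A v) : Prop :=
  p.IsFinite ∧ p.stopped = true

/-- The maximum rank occurring infinitely often on a play. -/
noncomputable def infRank {V : Type*} {A : Arena V} {v : V} (rank : V → ℕ)
    (p : Play A v) : ℕ :=
  sSup {r | ∀ N, ∃ n, N ≤ n ∧ ∃ u, p.seq n = some u ∧ rank u = r}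

/-- Player O wins a play: it is finite, not ended by STOP, and ends at a vertex of
player E, or it is infinite and the maximum rank occurring infinitely often is odd. -/
def OWinsPlay {V : Type*} {A : Arena V} {v : V} (rank : V → ℕ) (p : Play A v) : Prop :=
  (∃ n u, p.seq n = some u ∧ p.seq (n + 1) = none ∧ p.stopped = false ∧
    A.owner u = true) ∨
  ((∀ n, p.seq n ≠ none) ∧ Odd (infRank rank p))

/-- Player E wins a play: it is finite, not ended by STOP, and ends at a vertex of
player O, or it is infinite and the maximum rank occurring infinitely often is even. -/
def EWinsPlay {V : Type*} {A : Arena V} {v : V} (rank : V → ℕ) (p : Play A v) : Prop :=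
  (∃ n u, p.seq n = some u ∧ p.seq (n + 1) = none ∧ p.stopped = false ∧
    A.owner u = false) ∨
  ((∀ n, p.seq n ≠ none) ∧ Even (infRank rank p))

/-- A strategy is safe from `v` if no play from `v` consistent with it is won by O. -/
def SafeFrom {V : Type*} (A : Arena V) (rank : V → ℕ) (ρ : EStrategy A) (v : V) : Prop :=
  ∀ p : Play A v, ConsistentWith ρ p → ¬ OWinsPlay rank p

/-- A strategy is winning from `v` if every play from `v` consistent with it is won
by E. -/
def WinningFrom {V : Type*} (A : Arena V) (rank : V → ℕ) (ρ : EStrategy A) (v : V) :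
    Prop :=
  ∀ p : Play A v, ConsistentWith ρ p → EWinsPlay rank p

/-- A strategy of the ordinary parity game: it never plays STOP when an outgoing
edge exists. -/
def NonStopping {V : Type*} {A : Arena V} (ρ : EStrategy A) : Prop :=
  ∀ h u, A.owner u = true → (∃ w, A.edge u w) → ρ.move h u ≠ none

/-- A strategy is positional if its move depends only on the current vertex. -/
def Positional {V : Type*} {A : Arena V} (ρ : EStrategy A) : Prop :=
  ∀ h h' u, ρ.move h u = ρ.move h' u

/-- `ConsPath A ρ v h u`: starting at `v` there is a finite prefix of a play
consistent with `ρ` whose already-visited vertices are `h` and whose current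
(last) vertex is `u`; the full prefix is `h ++ [u]`. -/
inductive ConsPath {V : Type*} (A : Arena V) (ρ : EStrategy A) (v : V) :
    List V → V → Prop
  | refl : ConsPath A ρ v [] v
  | stepO (h : List V) (u w : V) :
      ConsPath A ρ v h u → A.owner u = false → A.edge u w → ConsPath A ρ v (h ++ [u]) w
  | stepE (h : List V) (u w : V) :
      ConsPath A ρ v h u → A.owner u = true → ρ.move h u = some w →
      ConsPath A ρ v (h ++ [u]) w

/-- The maximum rank of a vertex on a finite prefix of a play. -/
def maxRank {V : Type*} (rank : V → ℕ) (l : List V) : ℕ := (l.map rank).foldr max 0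

/-- The enforcement `Φ(G, ρ, v)` of a strategy `ρ` from a vertex `v` in the stop
parity game with player-aware coloring `χ`: its value at a color `c` is the
`⪯`-minimum of the maximum ranks of finite prefixes of plays from `v` consistent
with `ρ` that end at a vertex `w` of color `c`, where for `w ∈ V_E` only prefixes
at which `ρ` answers STOP are considered (undefined if there is no such prefix). -/
noncomputable def Phi {V C : Type*} (A : Arena V) (rank : V → ℕ) (χ : V → C)
    (ρ : EStrategy A) (v : V) : C → Option ℕ :=
  fun c => pmin {r | ∃ (w : V) (h : List V), χ w = c ∧ ConsPath A ρ v h w ∧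
    (A.owner w = true → ρ.move h w = none) ∧ r = maxRank rank (h ++ [w])}

/-- A set `S` of enforcements is valid for `v`: sound, complete and up-closed. -/
def ValidFamily {V C : Type*} (A : Arena V) (rank : V → ℕ) (χ : V → C) (v : V)
    (S : Set (C → Option ℕ)) : Prop :=
  (∀ P ∈ S, ∃ ρ : EStrategy A, SafeFrom A rank ρ v ∧ esub (Phi A rank χ ρ v) P) ∧
  (∀ ρ : EStrategy A, Positional ρ → SafeFrom A rank ρ v → Phi A rank χ ρ v ∈ S) ∧
  (∀ P ∈ S, ∀ Q, esub P Q → Q ∈ S)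

/-- The arena obtained by adding a directed edge from every vertex of color `s` to
every vertex of color `t`. -/
def addEdges {V C : Type*} (A : Arena V) (χ : V → C) (s t : C) : Arena V where
  owner := A.owner
  edge := fun u w => A.edge u w ∨ (χ u = s ∧ χ w = t)

/-- `Loop(P, c)` for `c` a color of player E: `P` itself if `c ∉ dom P`; `P` with
`c` removed from its domain if `P c` is even; undefined otherwise. -/
noncomputable def eloop {C : Type*} (P : C → Option ℕ) (c : C) :
    Option (C → Option ℕ) :=
  match P c with
  | none => some P
  | some r => if Even r then some (fun a => if a = c then none else P a) else none


/-! ### Auxiliary lemmas -/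

section Aux

lemma preceq_refl (p : ℕ) : preceq p p := Or.inr rfl

lemma emb_inj {p q : ℕ} (h : ((-1 : ℤ) ^ p * p) = ((-1 : ℤ) ^ q * q)) : p = q := by
  have h' := congrArg Int.natAbs h
  simpa [Int.natAbs_mul, Int.natAbs_pow] using h'

lemma preceq_antisymm {p q : ℕ} (h1 : preceq p q) (h2 : preceq q p) : p = q := by
  rcases h1 with h1 | h1
  · rcases h2 with h2 | h2
    · exact absurd h1 (not_lt.mpr (le_of_lt h2))
    · exact h2.symm
  · exact h1

lemma preceq_of_le {m x : ℕ} (e : ∀ p : ℕ, ((-1 : ℤ) ^ p * p) = ((-1 : ℤ) ^ p * p))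
    : True := trivial

lemma even_of_even_preceq {r m : ℕ} (hr : Even r) (h : preceq r m) : Even m ∧ r ≤ m := by
  rcases h with h | h
  · unfold prec at h
    rw [Even.neg_one_pow hr, one_mul] at h
    rcases Nat.even_or_odd m with hm | hm
    · rw [Even.neg_one_pow hm, one_mul] at h
      exact ⟨hm, by exact_mod_cast le_of_lt h⟩
    · rw [Odd.neg_one_pow hm, neg_one_mul] at h
      have : (0 : ℤ) ≤ r := Int.ofNat_nonneg r
      omega
  · subst h; exact ⟨hr, le_refl r⟩

lemma even_max_even {a b : ℕ} (ha : Even a) (hb : Even b) : Even (max a b) := by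
  rcases le_total a b with h | h
  · rwa [max_eq_right h]
  · rwa [max_eq_left h]

lemma preceq_max_right {μ x m : ℕ} (h : preceq μ x) (hm : Even m) : preceq μ (max m x) := by
  by_cases hmx : m ≤ x
  · rwa [max_eq_right hmx]
  · rw [max_eq_left (le_of_not_ge hmx)]
    rcases Nat.even_or_odd μ with hμ | hμ
    · obtain ⟨hex, hle⟩ := even_of_even_preceq hμ h
      have hle' : μ ≤ m := le_trans hle (le_of_not_ge hmx)
      rcases eq_or_lt_of_le hle' with heq | hlt
      · exact Or.inr heq
      · left
        unfold prec
        rw [Even.neg_one_pow hμ, Even.neg_one_pow hm, one_mul, one_mul]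
        exact_mod_cast hlt
    · left
      unfold prec
      rw [Odd.neg_one_pow hμ, Even.neg_one_pow hm, neg_one_mul, one_mul]
      have h1 : 1 ≤ μ := hμ.pos
      have : (0:ℤ) ≤ (m:ℤ) := Int.ofNat_nonneg m
      omega

lemma pmin_spec {S : Set ℕ} {m : ℕ} (h : pmin S = some m) :
    m ∈ S ∧ ∀ x ∈ S, preceq m x := by
  unfold pmin at h
  split_ifs at h with hx
  · obtain ⟨hm, hmin⟩ := hx.choose_spec
    cases h
    exact ⟨hm, hmin⟩

lemma pmin_eq_some {S : Set ℕ} {m : ℕ} (hm : m ∈ S) (hmin : ∀ x ∈ S, preceq m x) :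
    pmin S = some m := by
  have hx : ∃ m ∈ S, ∀ x ∈ S, preceq m x := ⟨m, hm, hmin⟩
  unfold pmin
  rw [dif_pos hx]
  congr 1
  obtain ⟨hc, hcmin⟩ := hx.choose_spec
  exact preceq_antisymm (hcmin m hm) (hmin _ hc)

lemma pmin_empty : pmin (∅ : Set ℕ) = none := by
  unfold pmin
  rw [dif_neg]
  rintro ⟨m, hm, -⟩
  exact hm

lemma pmin_exists_of_finite {S : Set ℕ} (hS : S.Finite) (hne : S.Nonempty) :
    ∃ m, pmin S = some m := by
  have hne' : hS.toFinset.Nonempty := by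
    rwa [Set.Finite.toFinset_nonempty]
  obtain ⟨m, hm, hmin⟩ := Finset.exists_min_image hS.toFinset
    (fun p : ℕ => ((-1 : ℤ) ^ p * p)) hne'
  refine ⟨m, pmin_eq_some (hS.mem_toFinset.mp hm) ?_⟩
  intro x hx
  have := hmin x (hS.mem_toFinset.mpr hx)
  rcases lt_or_eq_of_le this with h | h
  · exact Or.inl h
  · exact Or.inr (emb_inj h)

/-! maxRank lemmas -/

lemma maxRank_nil {V : Type*} (rank : V → ℕ) : maxRank rank [] = 0 := rfl

lemma maxRank_cons {V : Type*} (rank : V → ℕ) (x : V) (l : List V) :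
    maxRank rank (x :: l) = max (rank x) (maxRank rank l) := rfl

lemma maxRank_append {V : Type*} (rank : V → ℕ) (l₁ l₂ : List V) :
    maxRank rank (l₁ ++ l₂) = max (maxRank rank l₁) (maxRank rank l₂) := by
  induction l₁ with
  | nil => simp [maxRank_nil]
  | cons x l ih => simp [maxRank_cons, ih, max_assoc]

lemma le_maxRank {V : Type*} (rank : V → ℕ) {x : V} {l : List V} (hx : x ∈ l) :
    rank x ≤ maxRank rank l := by
  induction l with
  | nil => cases hx
  | cons y l ih =>
    rcases List.mem_cons.mp hx with h | h
    · subst h; rw [maxRank_cons]; exact le_max_left _ _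
    · rw [maxRank_cons]; exact le_trans (ih h) (le_max_right _ _)

lemma maxRank_le {V : Type*} (rank : V → ℕ) {B : ℕ} {l : List V}
    (h : ∀ x ∈ l, rank x ≤ B) : maxRank rank l ≤ B := by
  induction l with
  | nil => simp [maxRank_nil]
  | cons y l ih =>
    rw [maxRank_cons]
    exact max_le (h y (List.mem_cons_self)) (ih fun x hx => h x (List.mem_cons_of_mem _ hx))

lemma maxRank_mem {V : Type*} (rank : V → ℕ) : ∀ (l : List V), l ≠ [] →
    ∃ x ∈ l, maxRank rank l = rank x := by
  intro l
  induction l with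
  | nil => intro h; exact absurd rfl h
  | cons y l ih =>
    intro _
    rcases eq_or_ne l [] with rfl | hl
    · exact ⟨y, List.mem_cons_self, by simp [maxRank_cons, maxRank_nil]⟩
    · obtain ⟨x, hx, hmx⟩ := ih hl
      rcases le_total (rank y) (maxRank rank l) with h | h
      · exact ⟨x, List.mem_cons_of_mem _ hx, by rw [maxRank_cons, max_eq_right h, hmx]⟩
      · exact ⟨y, List.mem_cons_self, by rw [maxRank_cons, max_eq_left h]⟩

/-! set of naturals: unbounded/infinite -/

lemma nat_infinite_of_unbounded {s : Set ℕ} (h : ∀ M, ∃ n ∈ s, M ≤ n) : s.Infinite := by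
  intro hf
  obtain ⟨b, hb⟩ := hf.bddAbove
  obtain ⟨n, hn, hbn⟩ := h (b + 1)
  exact absurd (hb hn) (by omega)

lemma nat_unbounded_of_infinite {s : Set ℕ} (h : s.Infinite) : ∀ M, ∃ n ∈ s, M ≤ n := by
  intro M
  by_contra hcon
  push_neg at hcon
  exact h (Set.Finite.subset (Set.finite_Iio M) fun n hn => hcon n hn)

lemma nat_pigeonhole {s : Set ℕ} (hs : s.Infinite) (f : ℕ → ℕ) (B : ℕ)
    (hf : ∀ n ∈ s, f n ≤ B) : ∃ x, {n | n ∈ s ∧ f n = x}.Infinite := by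
  by_contra hcon
  push_neg at hcon
  refine hs (Set.Finite.subset (Set.Finite.biUnion (Finset.range (B + 1)).finite_toSet
    (fun x _ => hcon x)) ?_)
  intro n hn
  simp only [Set.mem_iUnion, Finset.coe_range, Set.mem_Iio]
  exact ⟨f n, Nat.lt_succ_of_le (hf n hn), hn, rfl⟩

end Aux

/-! ### The loop strategy -/

section LoopStrat

variable {V C : Type*}

/-- Effective history computation, on reversed histories. -/
noncomputable def effAux (A : Arena V) (χ : V → C) (c : C) (ρ : EStrategy A) :
    List V → List V
  | [] => []
  | u :: t =>
      if A.owner u = true ∧ χ u = c ∧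
          ρ.move (effAux A χ c ρ t).reverse u = none then []
      else u :: effAux A χ c ρ t

/-- The effective history: the part of the history after the last restart. -/
noncomputable def eff (A : Arena V) (χ : V → C) (c : C) (ρ : EStrategy A)
    (h : List V) : List V :=
  (effAux A χ c ρ h.reverse).reverse

lemma eff_nil (A : Arena V) (χ : V → C) (c : C) (ρ : EStrategy A) :
    eff A χ c ρ [] = [] := rfl

lemma eff_snoc (A : Arena V) (χ : V → C) (c : C) (ρ : EStrategy A) (h : List V) (u : V) :
    eff A χ c ρ (h ++ [u]) =
      if A.owner u = true ∧ χ u = c ∧ ρ.move (eff A χ c ρ h) u = none then []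
      else eff A χ c ρ h ++ [u] := by
  have h1 : (h ++ [u]).reverse = u :: h.reverse := by simp
  unfold eff
  rw [h1, effAux]
  split_ifs with hcond
  · simp
  · simp

/-- The strategy that behaves like `ρ`, except that whenever `ρ` would stop at a
vertex of color `c` it loops back to `v` and restarts. -/
noncomputable def loopStrat (A : Arena V) (χ : V → C) (c : C) (v : V) (ρ : EStrategy A)
    (hedge : ∀ u, χ u = c → A.edge u v) : EStrategy A where
  move h u :=
    if A.owner u = true ∧ χ u = c ∧ ρ.move (eff A χ c ρ h) u = none then some v
    else ρ.move (eff A χ c ρ h) u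
  legal h u w hw := by
    split_ifs at hw with hcond
    · cases hw; exact hedge u hcond.2.1
    · exact ρ.legal _ u w hw

lemma loopStrat_move (A : Arena V) (χ : V → C) (c : C) (v : V) (ρ : EStrategy A)
    (hedge : ∀ u, χ u = c → A.edge u v) (h : List V) (u : V) :
    (loopStrat A χ c v ρ hedge).move h u =
      if A.owner u = true ∧ χ u = c ∧ ρ.move (eff A χ c ρ h) u = none then some v
      else ρ.move (eff A χ c ρ h) u := rfl

/-- Any `ρ`-consistent path is also `loopStrat`-consistent, with `eff` the identity. -/
lemma consPath_embed (A : Arena V) (rank : V → ℕ) (χ : V → C) (c : C) (v : V)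
    (ρ : EStrategy A) (hedge : ∀ u, χ u = c → A.edge u v)
    {h : List V} {w : V} (hp : ConsPath A ρ v h w) :
    eff A χ c ρ h = h ∧ ConsPath A (loopStrat A χ c v ρ hedge) v h w := by
  induction hp with
  | refl => exact ⟨rfl, ConsPath.refl⟩
  | stepO h u w hp ho he ih =>
    obtain ⟨heff, hcp⟩ := ih
    have hcond : ¬(A.owner u = true ∧ χ u = c ∧ ρ.move (eff A χ c ρ h) u = none) := by
      rintro ⟨h1, -, -⟩; rw [ho] at h1; cases h1
    refine ⟨?_, ConsPath.stepO h u w hcp ho he⟩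
    rw [eff_snoc, if_neg hcond, heff]
  | stepE h u w hp ho hm ih =>
    obtain ⟨heff, hcp⟩ := ih
    have hcond : ¬(A.owner u = true ∧ χ u = c ∧ ρ.move (eff A χ c ρ h) u = none) := by
      rintro ⟨-, -, h3⟩; rw [heff, hm] at h3; cases h3
    refine ⟨?_, ConsPath.stepE h u w hcp ho ?_⟩
    · rw [eff_snoc, if_neg hcond, heff]
    · rw [loopStrat_move, if_neg hcond, heff]; exact hm

/-- Decomposition of a `loopStrat`-consistent path: the effective part is a
`ρ`-consistent path, and the max rank differs from that of the effective part by
an even quantity. -/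
lemma consPath_decomp (A : Arena V) (rank : V → ℕ) (χ : V → C) (c : C) (v : V)
    (ρ : EStrategy A) (hedge : ∀ u, χ u = c → A.edge u v)
    (hEvenC : ∀ (w : V) (h : List V), χ w = c → ConsPath A ρ v h w →
      ρ.move h w = none → Even (maxRank rank (h ++ [w])))
    {h : List V} {w : V} (hp : ConsPath A (loopStrat A χ c v ρ hedge) v h w) :
    ConsPath A ρ v (eff A χ c ρ h) w ∧
      ∃ k, Even k ∧
        maxRank rank (h ++ [w]) = max k (maxRank rank (eff A χ c ρ h ++ [w])) := by
  induction hp with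
  | refl =>
    exact ⟨ConsPath.refl, 0, Even.zero, by rw [eff_nil]; simp⟩
  | stepO h u w hp ho he ih =>
    obtain ⟨hcp, k, hk, hmr⟩ := ih
    have hcond : ¬(A.owner u = true ∧ χ u = c ∧ ρ.move (eff A χ c ρ h) u = none) := by
      rintro ⟨h1, -, -⟩; rw [ho] at h1; cases h1
    have heff : eff A χ c ρ (h ++ [u]) = eff A χ c ρ h ++ [u] := by
      rw [eff_snoc, if_neg hcond]
    refine ⟨by rw [heff]; exact ConsPath.stepO _ u w hcp ho he, k, hk, ?_⟩
    rw [heff, maxRank_append rank (h ++ [u]) [w], hmr,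
      maxRank_append rank (eff A χ c ρ h ++ [u]) [w]]
    omega
  | stepE h u w hp ho hm ih =>
    obtain ⟨hcp, k, hk, hmr⟩ := ih
    rw [loopStrat_move] at hm
    by_cases hcond : A.owner u = true ∧ χ u = c ∧ ρ.move (eff A χ c ρ h) u = none
    · -- restart
      rw [if_pos hcond] at hm
      have hw : w = v := by cases hm; rfl
      subst hw
      have heff : eff A χ c ρ (h ++ [u]) = [] := by rw [eff_snoc, if_pos hcond]
      refine ⟨by rw [heff]; exact ConsPath.refl,
        max k (maxRank rank (eff A χ c ρ h ++ [u])), ?_, ?_⟩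
      · exact even_max_even hk (hEvenC u (eff A χ c ρ h) hcond.2.1 hcp hcond.2.2)
      · rw [heff, List.nil_append, maxRank_append rank (h ++ [u]) _, hmr]
    · rw [if_neg hcond] at hm
      have heff : eff A χ c ρ (h ++ [u]) = eff A χ c ρ h ++ [u] := by
        rw [eff_snoc, if_neg hcond]
      refine ⟨by rw [heff]; exact ConsPath.stepE _ u w hcp ho hm, k, hk, ?_⟩
      rw [heff, maxRank_append rank (h ++ [u]) [w], hmr,
        maxRank_append rank (eff A χ c ρ h ++ [u]) [w]]
      omega

end LoopStrat

/-! ### Plays and paths -/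

section Plays

variable {V : Type*} {A : Arena V} {v : V}

lemma hist_snoc (p : Play A v) {n : ℕ} {w : V} (hw : p.seq n = some w) :
    p.hist (n + 1) = p.hist n ++ [w] := by
  unfold Play.hist
  rw [List.range_succ, List.filterMap_append]
  simp [hw]

lemma consPath_of_play (σ : EStrategy A) (p : Play A v) (hp : ConsistentWith σ p) :
    ∀ n w, p.seq n = some w → ConsPath A σ v (p.hist n) w := by
  intro n
  induction n with
  | zero =>
    intro w hw
    have h0 := p.start
    rw [h0] at hw
    cases hw
    have : p.hist 0 = [] := by simp [Play.hist]
    rw [this]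
    exact ConsPath.refl
  | succ n ih =>
    intro w hw
    cases hn : p.seq n with
    | none => rw [p.none_succ n hn] at hw; cases hw
    | some x =>
      have hcp := ih x hn
      rw [hist_snoc p hn]
      cases how : A.owner x with
      | false => exact ConsPath.stepO _ x w hcp how (p.step n x w hn hw)
      | true =>
        have hmv := (hp n x hn how).1
        rw [hw] at hmv
        exact ConsPath.stepE _ x w hcp how hmv.symm

end Plays

lemma pmin_eq_none {S : Set ℕ} (h : ∀ x, x ∉ S) : pmin S = none := by
  unfold pmin
  rw [dif_neg]
  rintro ⟨m, hm, -⟩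
  exact h m hm

/-- Shift of an infinite play. -/
noncomputable def shiftPlay {V : Type*} {A : Arena V} {v₀ v : V} (p : Play A v₀) (N : ℕ)
    (hv : p.seq N = some v) (hinf : ∀ n, p.seq n ≠ none) : Play A v where
  seq := fun m => p.seq (N + m)
  stopped := true
  start := hv
  none_succ := fun n h => absurd h (hinf _)
  step := fun n a b h1 h2 => p.step (N + n) a b h1 h2
  maximal := fun _ _ _ h2 => absurd h2 (hinf _)

@[simp] lemma shiftPlay_seq {V : Type*} {A : Arena V} {v₀ v : V} (p : Play A v₀) (N : ℕ)
    (hv : p.seq N = some v) (hinf : ∀ n, p.seq n ≠ none) (m : ℕ) :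
    (shiftPlay p N hv hinf).seq m = p.seq (N + m) := rfl

/-- Reset points of a play with restart predicate `Rc`. -/
noncomputable def resetPt (Rc : ℕ → Prop) : ℕ → ℕ
  | 0 => 0
  | n + 1 => if Rc n then n + 1 else resetPt Rc n

theorem stmt14 {V C : Type*} [Fintype V] [Fintype C] (A : Arena V) (rank : V → ℕ)
    (CE : Set C) (χ : V → C) (hχ : ∀ u, A.owner u = true ↔ χ u ∈ CE)
    (c : C) (hc : c ∈ CE) (v : V) (ρ : EStrategy A)
    (hρ : SafeFrom A rank ρ v)
    (hedge : ∀ u, χ u = c → A.edge u v)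
    (L : C → Option ℕ) (hL : eloop (Phi A rank χ ρ v) c = some L) :
    ∃ ρ' : EStrategy A, SafeFrom A rank ρ' v ∧ Phi A rank χ ρ' v = L := by
  rcases hc0 : Phi A rank χ ρ v c with _ | r
  · -- c not in the domain of Φ: take ρ' = ρ
    refine ⟨ρ, hρ, ?_⟩
    have he : eloop (Phi A rank χ ρ v) c = some (Phi A rank χ ρ v) := by
      unfold eloop; rw [hc0]
    rw [he] at hL
    exact Option.some_inj.mp hL
  · -- the main case
    have hL' : Even r ∧ L = fun a => if a = c then none else Phi A rank χ ρ v a := by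
      have he : eloop (Phi A rank χ ρ v) c =
          if Even r then some (fun a => if a = c then none else Phi A rank χ ρ v a)
          else none := by
        unfold eloop; rw [hc0]
      rw [he] at hL
      split_ifs at hL with hev
      exact ⟨hev, (Option.some_inj.mp hL).symm⟩
    obtain ⟨hev, hLdef⟩ := hL'
    obtain ⟨hrS, hrmin⟩ := pmin_spec (show pmin _ = some r from hc0)
    have hEvenC : ∀ (w : V) (h : List V), χ w = c → ConsPath A ρ v h w →
        ρ.move h w = none → Even (maxRank rank (h ++ [w])) := by
      intro w h hw hcp hmv
      have hxS : maxRank rank (h ++ [w]) ∈ {r | ∃ (w : V) (h : List V), χ w = c ∧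
          ConsPath A ρ v h w ∧ (A.owner w = true → ρ.move h w = none) ∧
          r = maxRank rank (h ++ [w])} := ⟨w, h, hw, hcp, fun _ => hmv, rfl⟩
      exact (even_of_even_preceq hev (hrmin _ hxS)).1
    set ρ' := loopStrat A χ c v ρ hedge with hρ'def
    have hrankB : ∀ x : V, rank x ≤ Finset.univ.sup rank :=
      fun x => Finset.le_sup (Finset.mem_univ x)
    -- decomposition of ρ'-prefixes
    have hkey : ∀ a, a ≠ c → ∀ x, (∃ (w : V) (h : List V), χ w = a ∧ ConsPath A ρ' v h w ∧
        (A.owner w = true → ρ'.move h w = none) ∧ x = maxRank rank (h ++ [w])) →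
        ∃ y k, (∃ (w : V) (h : List V), χ w = a ∧ ConsPath A ρ v h w ∧
          (A.owner w = true → ρ.move h w = none) ∧ y = maxRank rank (h ++ [w])) ∧
          Even k ∧ x = max k y := by
      rintro a hac x ⟨w, h, hwa, hcp, hstop, rfl⟩
      obtain ⟨hcp', k, hk, hmr⟩ := consPath_decomp A rank χ c v ρ hedge hEvenC hcp
      refine ⟨_, k, ⟨w, eff A χ c ρ h, hwa, hcp', ?_, rfl⟩, hk, hmr⟩
      intro how
      have hmv := hstop how
      rw [hρ'def, loopStrat_move] at hmv
      split_ifs at hmv with hcond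
      exact hmv
    -- embedding of ρ-prefixes
    have hsub : ∀ a, a ≠ c → ∀ x, (∃ (w : V) (h : List V), χ w = a ∧ ConsPath A ρ v h w ∧
        (A.owner w = true → ρ.move h w = none) ∧ x = maxRank rank (h ++ [w])) →
        (∃ (w : V) (h : List V), χ w = a ∧ ConsPath A ρ' v h w ∧
        (A.owner w = true → ρ'.move h w = none) ∧ x = maxRank rank (h ++ [w])) := by
      rintro a hac x ⟨w, h, hwa, hcp, hstop, rfl⟩
      obtain ⟨heff, hcp'⟩ := consPath_embed A rank χ c v ρ hedge hcp
      refine ⟨w, h, hwa, hcp', ?_, rfl⟩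
      intro how
      have hcond : ¬(A.owner w = true ∧ χ w = c ∧ ρ.move (eff A χ c ρ h) w = none) := by
        rintro ⟨-, h2, -⟩
        exact hac (by rw [← hwa, h2])
      rw [hρ'def, loopStrat_move, if_neg hcond, heff]
      exact hstop how
    -- the value of Φ(ρ', v)
    have hPhi' : Phi A rank χ ρ' v = L := by
      rw [hLdef]
      funext a
      by_cases hac : a = c
      · subst hac
        rw [if_pos rfl]
        apply pmin_eq_none
        rintro x ⟨w, h, hwa, hcp, hstop, rfl⟩
        have how : A.owner w = true := (hχ w).mpr (by rw [hwa]; exact hc)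
        have hmv := hstop how
        rw [hρ'def, loopStrat_move] at hmv
        split_ifs at hmv with hcond
        exact hcond ⟨how, hwa, hmv⟩
      · rw [if_neg hac]
        rcases hPa : Phi A rank χ ρ v a with _ | μ
        · apply pmin_eq_none
          intro x hx
          obtain ⟨y, k, hy, -, -⟩ := hkey a hac x hx
          have hfin : ({r | ∃ (w : V) (h : List V), χ w = a ∧ ConsPath A ρ v h w ∧
              (A.owner w = true → ρ.move h w = none) ∧
              r = maxRank rank (h ++ [w])} : Set ℕ).Finite := by
            refine Set.Finite.subset (Set.finite_Iic (Finset.univ.sup rank)) ?_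
            rintro z ⟨w, h, -, -, -, rfl⟩
            exact maxRank_le rank fun t _ => hrankB t
          obtain ⟨m, hm⟩ := pmin_exists_of_finite hfin ⟨y, hy⟩
          have : Phi A rank χ ρ v a = some m := hm
          rw [hPa] at this
          cases this
        · obtain ⟨hμS, hμmin⟩ := pmin_spec (show pmin _ = some μ from hPa)
          apply pmin_eq_some
          · exact hsub a hac μ hμS
          · intro x hx
            obtain ⟨y, k, hyS, hk, hxy⟩ := hkey a hac x hx
            rw [hxy]
            exact preceq_max_right (hμmin y hyS) hk
    refine ⟨ρ', ?_, hPhi'⟩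
    intro p hcons howins
    rcases howins with ⟨n, w, hn, hn1, hns, how⟩ | ⟨hinf, hodd⟩
    · have hstop := (hcons n w hn how).2 hn1
      rw [hstop] at hns
      cases hns
    · -- infinite play
      have hex : ∀ n, ∃ x, p.seq n = some x := fun n => Option.ne_none_iff_exists'.mp (hinf n)
      choose u hus using hex
      set Rc : ℕ → Prop := fun n => A.owner (u n) = true ∧ χ (u n) = c ∧
        ρ.move (eff A χ c ρ (p.hist n)) (u n) = none with hRcdef
      have hRc : ∀ n, Rc n ↔ (A.owner (u n) = true ∧ χ (u n) = c ∧
          ρ.move (eff A χ c ρ (p.hist n)) (u n) = none) := fun n => Iff.rfl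
      have hhist : ∀ n, p.hist (n + 1) = p.hist n ++ [u n] := fun n => hist_snoc p (hus n)
      have hhist0 : p.hist 0 = [] := by simp [Play.hist]
      -- the invariant on reset points
      have hinv : ∀ n, resetPt Rc n ≤ n ∧
          (resetPt Rc n = 0 ∨ ∃ m, m < n ∧ resetPt Rc n = m + 1 ∧ Rc m) ∧
          (∀ j, resetPt Rc n ≤ j → j < n → ¬ Rc j) ∧
          eff A χ c ρ (p.hist n) =
            (List.range' (resetPt Rc n) (n - resetPt Rc n)).map u := by
        intro n
        induction n with
        | zero =>
          refine ⟨le_refl 0, Or.inl rfl, by omega, ?_⟩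
          simp [resetPt, hhist0, eff_nil]
        | succ n ih =>
          obtain ⟨h1, h2, h3, h4⟩ := ih
          by_cases hrc : Rc n
          · have hres : resetPt Rc (n + 1) = n + 1 := by
              simp only [resetPt]; rw [if_pos hrc]
            refine ⟨by omega, Or.inr ⟨n, by omega, hres, hrc⟩, by omega, ?_⟩
            rw [hres, hhist n, eff_snoc, if_pos ((hRc n).mp hrc)]
            simp
          · have hres : resetPt Rc (n + 1) = resetPt Rc n := by
              simp only [resetPt]; rw [if_neg hrc]
            refine ⟨by omega, ?_, ?_, ?_⟩
            · rcases h2 with h2 | ⟨m, hm, hme, hmr⟩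
              · exact Or.inl (by omega)
              · exact Or.inr ⟨m, by omega, by omega, hmr⟩
            · intro j hj1 hj2
              rcases Nat.lt_or_ge j n with hjn | hjn
              · exact h3 j (by omega) hjn
              · have : j = n := by omega
                subst this
                exact hrc
            · have hncond : ¬(A.owner (u n) = true ∧ χ (u n) = c ∧
                  ρ.move (eff A χ c ρ (p.hist n)) (u n) = none) := fun h => hrc ((hRc n).mpr h)
              rw [hres, hhist n, eff_snoc, if_neg hncond, h4]
              have e2 : n + 1 - resetPt Rc n = (n - resetPt Rc n) + 1 := by omega
              have e3 : resetPt Rc n + 1 * (n - resetPt Rc n) = n := by omega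
              rw [e2, List.range'_concat, List.map_append, e3]
              simp
      -- consistency along the play
      have hcpn : ∀ n, ConsPath A ρ' v (p.hist n) (u n) :=
        fun n => consPath_of_play ρ' p hcons n (u n) (hus n)
      have hdn : ∀ n, Rc n → Even (maxRank rank (eff A χ c ρ (p.hist n) ++ [u n])) := by
        intro n hrc
        obtain ⟨hcp', -⟩ := consPath_decomp A rank χ c v ρ hedge hEvenC (hcpn n)
        exact hEvenC (u n) _ ((hRc n).mp hrc).2.1 hcp' ((hRc n).mp hrc).2.2
      have hnext : ∀ n, Rc n → u (n + 1) = v := by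
        intro n hrc
        have h1 := (hcons n (u n) (hus n) ((hRc n).mp hrc).1).1
        rw [hus (n + 1), hρ'def, loopStrat_move, if_pos ((hRc n).mp hrc)] at h1
        exact Option.some_inj.mp h1
      by_cases hTub : ∀ M, ∃ n, M ≤ n ∧ Rc n
      · -- Case B : infinitely many restarts
        have hIObdd : BddAbove {r | ∀ M, ∃ n, M ≤ n ∧ ∃ w, p.seq n = some w ∧ rank w = r} := by
          refine ⟨Finset.univ.sup rank, fun r hr => ?_⟩
          obtain ⟨n, -, w, -, hw⟩ := hr 0
          exact hw ▸ hrankB w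
        have hIOne : Set.Nonempty {r | ∀ M, ∃ n, M ≤ n ∧ ∃ w, p.seq n = some w ∧ rank w = r} := by
          obtain ⟨w, hwinf⟩ := Finite.exists_infinite_fiber u
          have hwinf' : (u ⁻¹' {w}).Infinite := Set.infinite_coe_iff.mp hwinf
          refine ⟨rank w, fun M => ?_⟩
          obtain ⟨n, hn1, hn2⟩ := nat_unbounded_of_infinite hwinf' M
          have he : u n = w := hn1
          exact ⟨n, hn2, u n, hus n, by rw [he]⟩
        have hR : infRank rank p ∈
            {r | ∀ M, ∃ n, M ≤ n ∧ ∃ w, p.seq n = some w ∧ rank w = r} :=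
          Nat.sSup_mem hIOne hIObdd
        -- the set of restarts with large segment maximum
        have hWub : ∀ M, ∃ n ∈ {n | Rc n ∧
            infRank rank p ≤ maxRank rank (eff A χ c ρ (p.hist n) ++ [u n])}, M ≤ n := by
          intro M
          obtain ⟨k, hkM, w, hkseq, hkrank⟩ := hR M
          have hkw : w = u k := by
            rw [hus k] at hkseq
            exact (Option.some_inj.mp hkseq).symm
          subst hkw
          have hfind : ∃ n, k ≤ n ∧ Rc n := hTub k
          obtain ⟨hkn, hrcn⟩ := Nat.find_spec hfind
          have hmin : ∀ j, j < Nat.find hfind → ¬(k ≤ j ∧ Rc j) :=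
            fun j hj => Nat.find_min hfind hj
          obtain ⟨ht1, ht2, ht3, ht4⟩ := hinv (Nat.find hfind)
          have htk : resetPt Rc (Nat.find hfind) ≤ k := by
            by_contra hlt
            push_neg at hlt
            rcases ht2 with h0 | ⟨m, hm1, hm2, hm3⟩
            · omega
            · exact hmin m (by omega) ⟨by omega, hm3⟩
          have hmem : u k ∈ eff A χ c ρ (p.hist (Nat.find hfind)) ++ [u (Nat.find hfind)] := by
            rcases Nat.lt_or_ge k (Nat.find hfind) with hkn' | hkn'
            · apply List.mem_append_left
              rw [ht4]
              exact List.mem_map.mpr ⟨k, List.mem_range'_1.mpr ⟨htk, by omega⟩, rfl⟩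
            · exact List.mem_append_right _
                (List.mem_singleton.mpr (congrArg u (by omega)))
          refine ⟨Nat.find hfind, ⟨hrcn, ?_⟩, by omega⟩
          calc infRank rank p = rank (u k) := hkrank.symm
          _ ≤ _ := le_maxRank rank hmem
        have hWinf := nat_infinite_of_unbounded hWub
        obtain ⟨x, hWx⟩ := nat_pigeonhole hWinf
          (fun n => maxRank rank (eff A χ c ρ (p.hist n) ++ [u n])) (Finset.univ.sup rank)
          (fun n _ => maxRank_le rank (fun y _ => hrankB y))
        obtain ⟨n₀, hn₀⟩ := hWx.nonempty
        have hxeven : Even x := hn₀.2 ▸ hdn n₀ hn₀.1.1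
        have hRx : infRank rank p ≤ x := hn₀.2 ▸ hn₀.1.2
        have hxIO : x ∈ {r | ∀ M, ∃ n, M ≤ n ∧ ∃ w, p.seq n = some w ∧ rank w = r} := by
          intro M
          obtain ⟨t₀, ht₀W, ht₀M⟩ := nat_unbounded_of_infinite hWx M
          obtain ⟨n, hnW, hnt⟩ := nat_unbounded_of_infinite hWx (t₀ + 1)
          obtain ⟨ht1, ht2, ht3, ht4⟩ := hinv n
          have hrct₀ : Rc t₀ := ht₀W.1.1
          have htlt : t₀ < resetPt Rc n := by
            by_contra hle
            push_neg at hle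
            exact ht3 t₀ hle (by omega) hrct₀
          have hne : eff A χ c ρ (p.hist n) ++ [u n] ≠ [] := by simp
          obtain ⟨y, hy, hmy⟩ := maxRank_mem rank _ hne
          have hj : ∃ j, resetPt Rc n ≤ j ∧ j ≤ n ∧ u j = y := by
            rcases List.mem_append.mp hy with h | h
            · rw [ht4] at h
              obtain ⟨j, hjr, hjy⟩ := List.mem_map.mp h
              have := List.mem_range'_1.mp hjr
              exact ⟨j, this.1, by omega, hjy⟩
            · exact ⟨n, by omega, le_refl n, (List.mem_singleton.mp h).symm⟩
          obtain ⟨j, hj1, hj2, hj3⟩ := hj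
          refine ⟨j, by omega, u j, hus j, ?_⟩
          rw [hj3, ← hmy]
          exact hnW.2
        have hxR : x ≤ infRank rank p := le_csSup hIObdd hxIO
        have : Even (infRank rank p) := by
          have : x = infRank rank p := le_antisymm hxR hRx
          rwa [this] at hxeven
        exact (Nat.not_odd_iff_even.mpr this) hodd

      · -- Case A : finitely many restarts
        push_neg at hTub
        obtain ⟨M, hM⟩ := hTub
        have hPb : ∃ N, ∀ n, N ≤ n → ¬ Rc n := ⟨M, hM⟩
        have hN : ∀ n, Nat.find hPb ≤ n → ¬ Rc n := Nat.find_spec hPb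
        set N := Nat.find hPb with hNdef
        have hstart : p.seq N = some v ∧ eff A χ c ρ (p.hist N) = [] := by
          rcases Nat.eq_zero_or_pos N with h0 | h0
          · rw [h0]
            exact ⟨p.start, by rw [hhist0, eff_nil]⟩
          · obtain ⟨m, hm⟩ : ∃ m, N = m + 1 := ⟨N - 1, by omega⟩
            have hnot : ¬ (∀ n, m ≤ n → ¬ Rc n) := Nat.find_min hPb (by omega)
            push_neg at hnot
            obtain ⟨j, hj1, hj2⟩ := hnot
            have hj : j = m := by
              by_contra hne
              exact hN j (by omega) hj2
            subst hj
            have huv : u (j + 1) = v := hnext j hj2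
            constructor
            · rw [hm, hus (j + 1), huv]
            · rw [hm, hhist j, eff_snoc, if_pos ((hRc j).mp hj2)]
        obtain ⟨hv', heffN⟩ := hstart
        refine absurd (?_ : OWinsPlay rank (shiftPlay p N hv' hinf)) (hρ (shiftPlay p N hv' hinf) ?_)
        case _ =>
          -- the shifted play is won by O
          refine Or.inr ⟨fun n => hinf (N + n), ?_⟩
          have hiR : infRank rank (shiftPlay p N hv' hinf) = infRank rank p := by
            unfold infRank
            congr 1
            ext r
            simp only [Set.mem_setOf_eq]
            constructor
            · intro hq M
              obtain ⟨n, hn1, w, hw1, hw2⟩ := hq M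
              exact ⟨N + n, by omega, w, hw1, hw2⟩
            · intro hp' M
              obtain ⟨n, hn1, w, hw1, hw2⟩ := hp' (N + M)
              refine ⟨n - N, by omega, w, ?_, hw2⟩
              show p.seq (N + (n - N)) = some w
              rw [show N + (n - N) = n by omega]
              exact hw1
          rw [hiR]
          exact hodd
        · -- consistency with ρ
          have hqhist : ∀ m, (shiftPlay p N hv' hinf).hist m
              = eff A χ c ρ (p.hist (N + m)) := by
            intro m
            induction m with
            | zero =>
              show (shiftPlay p N hv' hinf).hist 0 = eff A χ c ρ (p.hist N)
              rw [heffN]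
              simp [Play.hist]
            | succ m ih =>
              rw [hist_snoc (shiftPlay p N hv' hinf)
                (show (shiftPlay p N hv' hinf).seq m = some (u (N + m)) from hus (N + m)), ih]
              have hncond : ¬(A.owner (u (N + m)) = true ∧ χ (u (N + m)) = c ∧
                  ρ.move (eff A χ c ρ (p.hist (N + m))) (u (N + m)) = none) :=
                fun h => hN (N + m) (by omega) ((hRc (N + m)).mpr h)
              rw [show N + (m + 1) = (N + m) + 1 from rfl, hhist (N + m), eff_snoc,
                if_neg hncond]
          intro m w hw how
          have hw' : p.seq (N + m) = some w := hw
          have hwu : w = u (N + m) := by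
            rw [hus (N + m)] at hw'
            exact (Option.some_inj.mp hw').symm
          subst hwu
          constructor
          · have hc1 := (hcons (N + m) _ (hus (N + m)) how).1
            have hncond : ¬(A.owner (u (N + m)) = true ∧ χ (u (N + m)) = c ∧
                ρ.move (eff A χ c ρ (p.hist (N + m))) (u (N + m)) = none) :=
              fun h => hN (N + m) (by omega) ((hRc (N + m)).mpr h)
            show p.seq ((N + m) + 1) = _
            rw [hc1, hρ'def, loopStrat_move, if_neg hncond, hqhist m]
          · intro hnone
            exact absurd hnone (hinf _)
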